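/- arXiv:1501.03051 — 8 statements merged into one kernel-verified Lean document; each statement's English description precedes it below -/
import Mathlib

section
/- In the ring R of rational polynomials with integer constant term, the element X + 1 is irreducible: it is not a unit, and whenever X + 1 = a·b with a, b ∈ R, then a or b is a unit of R. -/
open Polynomial

noncomputable def R : Subring (Polynomial ℚ) where
  carrier := {f | ∃ n : ℤ, f.coeff 0 = (n : ℚ)}
  zero_mem' := ⟨0, by simp⟩
  one_mem' := ⟨1, by simp⟩
  add_mem' := by rintro f g ⟨a, ha⟩ ⟨b, hb⟩; exact ⟨a + b, by simp [ha, hb]⟩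
  neg_mem' := by rintro f ⟨a, ha⟩; exact ⟨-a, by simp [ha]⟩
  mul_mem' := by rintro f g ⟨a, ha⟩ ⟨b, hb⟩; exact ⟨a * b, by simp [Polynomial.mul_coeff_zero, ha, hb]⟩

lemma mem_R {f : Polynomial ℚ} : f ∈ R ↔ ∃ n : ℤ, f.coeff 0 = (n : ℚ) := Iff.rfl

lemma C_intCast_mem_R (m : ℤ) : C (m : ℚ) ∈ R := mem_R.mpr ⟨m, coeff_C_zero⟩

/-- If `a` is a constant `c`, then `c * b(0) = 1` with `b(0) ∈ ℤ`, so the constant `b(0)` is an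
inverse of `a` inside `R`. -/
lemma isUnit_of_isUnit_coe_of_coeff_zero_mul_eq_one {a b : R} (ha : IsUnit (a : ℚ[X]))
    (hab : ((a : ℚ[X]) * (b : ℚ[X])).coeff 0 = 1) : IsUnit a := by
  obtain ⟨c, -, hc⟩ := isUnit_iff.mp ha
  obtain ⟨m, hm⟩ := mem_R.mp b.2
  rw [mul_coeff_zero, ← hc, coeff_C_zero, hm] at hab
  refine IsUnit.of_mul_eq_one (⟨C (m : ℚ), C_intCast_mem_R m⟩ : R) (Subtype.ext ?_)
  change (a : ℚ[X]) * C (m : ℚ) = 1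
  rw [← hc, ← C_mul, hab, C_1]

lemma irreducible_X_add_one : Irreducible (X + 1 : ℚ[X]) := by
  simpa using irreducible_X_sub_C (-1 : ℚ)

/-- X + 1 is irreducible in R. -/
theorem stmt_3 : Irreducible (⟨X + 1, mem_R.mpr ⟨1, by simp⟩⟩ : R) := by
  refine ⟨fun h => irreducible_X_add_one.not_isUnit (h.map R.subtype), fun a b hab => ?_⟩
  have hab' : (a : ℚ[X]) * (b : ℚ[X]) = X + 1 := (congrArg Subtype.val hab).symm
  have hconst : ((a : ℚ[X]) * (b : ℚ[X])).coeff 0 = 1 := by simp [hab']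
  rcases irreducible_X_add_one.isUnit_or_isUnit hab'.symm with ha | hb
  · exact .inl (isUnit_of_isUnit_coe_of_coeff_zero_mul_eq_one ha hconst)
  · rw [mul_comm] at hconst
    exact .inr (isUnit_of_isUnit_coe_of_coeff_zero_mul_eq_one hb hconst)
end

section
/- In the ring R of rational polynomials with integer constant term, the element X - 1 is irreducible: it is not a unit, and whenever X - 1 = a·b with a, b ∈ R, then a or b is a unit of R. -/
open Polynomial

/-! The constant term, as a ring homomorphism `R →+* ℤ`, controls the units of `R`: an element
that is a unit of `ℚ[X]` is a constant, and it is a unit of `R` once that constant is `±1`.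
Hence a factorization in `R` of an irreducible of `ℚ[X]` with constant term `±1` is trivial. -/

namespace R

noncomputable def constCoeff : R →+* ℤ where
  toFun a := Classical.choose a.2
  map_one' := Int.cast_injective <| by
    rw [← Classical.choose_spec (1 : R).2]; simp
  map_mul' a b := Int.cast_injective <| by
    rw [← Classical.choose_spec (a * b).2, Int.cast_mul, ← Classical.choose_spec a.2,
      ← Classical.choose_spec b.2, Subring.coe_mul, mul_coeff_zero]
  map_zero' := Int.cast_injective <| by
    rw [← Classical.choose_spec (0 : R).2]; simp
  map_add' a b := Int.cast_injective <| by
    rw [← Classical.choose_spec (a + b).2, Int.cast_add, ← Classical.choose_spec a.2,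
      ← Classical.choose_spec b.2, Subring.coe_add, coeff_add]

lemma intCast_constCoeff (a : R) : (constCoeff a : ℚ) = (a : ℚ[X]).coeff 0 :=
  (Classical.choose_spec a.2).symm

lemma isUnit_of_isUnit_coe {a : R} (ha : IsUnit (a : ℚ[X])) (hc : IsUnit (constCoeff a)) :
    IsUnit a := by
  have ha_C : (a : ℚ[X]) = C (constCoeff a : ℚ) := by
    rw [intCast_constCoeff]
    exact eq_C_of_natDegree_eq_zero (natDegree_eq_zero_of_isUnit ha)
  refine IsUnit.of_mul_eq_one a (Subtype.ext ?_)
  rw [Subring.coe_mul, ha_C, ← C_mul, ← Int.cast_mul, Int.isUnit_mul_self hc]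
  simp

lemma irreducible_of_irreducible_coe {f : R} (hf : Irreducible (f : ℚ[X]))
    (hc : IsUnit (constCoeff f)) : Irreducible f := by
  refine ⟨fun hu ↦ hf.not_isUnit (hu.map R.subtype), fun a b hab ↦ ?_⟩
  have hab' : (f : ℚ[X]) = a * b := congrArg Subtype.val hab
  rcases hf.isUnit_or_isUnit hab' with ha | hb
  · refine .inl (isUnit_of_isUnit_coe ha (isUnit_of_dvd_unit ?_ hc))
    exact map_dvd constCoeff (Dvd.intro b hab.symm)
  · refine .inr (isUnit_of_isUnit_coe hb (isUnit_of_dvd_unit ?_ hc))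
    exact map_dvd constCoeff (Dvd.intro_left a hab.symm)

end R

/-- X - 1 is irreducible in R. -/
theorem stmt_4 : Irreducible (⟨X - 1, mem_R.mpr ⟨-1, by simp⟩⟩ : R) := by
  refine R.irreducible_of_irreducible_coe ?_ ?_
  · simpa using irreducible_X_sub_C (1 : ℚ)
  · rw [show R.constCoeff ⟨X - 1, _⟩ = -1 from
      Int.cast_injective (α := ℚ) (by simp [R.intCast_constCoeff])]
    exact isUnit_one.neg
end

section
/- For every positive integer n, the element (1/n)·X + 1 of the ring R of rational polynomials with integer constant term is irreducible in R. -/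
open Polynomial

/-!
In `ℚ[X]` a factorisation of a polynomial of degree one has a constant factor `c`; inside `R` both
`c` and the constant term of the cofactor are integers with product `1`, so `c = ±1` is a unit
of `R`.
-/

namespace R

lemma isUnit_of_natDegree_eq_zero {a b : R} (ha : (a : ℚ[X]).natDegree = 0)
    (hab : (a : ℚ[X]).coeff 0 * (b : ℚ[X]).coeff 0 = 1) : IsUnit a := by
  obtain ⟨m, hm⟩ := mem_R.mp a.2
  obtain ⟨k, hk⟩ := mem_R.mp b.2
  have hm_unit : IsUnit m := IsUnit.of_mul_eq_one k (by rw [hm, hk] at hab; exact_mod_cast hab)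
  have ha_eq : a = (m : R) := by
    apply Subtype.ext
    rw [eq_C_of_natDegree_eq_zero ha, hm, Subring.coe_intCast, ← C_eq_intCast]
  rw [ha_eq]
  exact hm_unit.map (Int.castRingHom R)

lemma irreducible_of_natDegree_eq_one {f : R} (hdeg : (f : ℚ[X]).natDegree = 1)
    (hcoeff : (f : ℚ[X]).coeff 0 = 1) : Irreducible f := by
  refine ⟨fun hu => ?_, fun a b hab => ?_⟩
  · have := natDegree_eq_zero_of_isUnit (hu.map R.subtype)
    simp only [Subring.coe_subtype, hdeg] at this
    exact one_ne_zero this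
  · have hval : (f : ℚ[X]) = a * b := congrArg Subtype.val hab
    have hf0 : (f : ℚ[X]) ≠ 0 := ne_zero_of_natDegree_gt (n := 0) (by omega)
    have hdeg_sum : (a : ℚ[X]).natDegree + (b : ℚ[X]).natDegree = 1 := by
      rw [← natDegree_mul (left_ne_zero_of_mul (hval ▸ hf0)) (right_ne_zero_of_mul (hval ▸ hf0)),
        ← hval, hdeg]
    have hconst : (a : ℚ[X]).coeff 0 * (b : ℚ[X]).coeff 0 = 1 := by
      rw [← mul_coeff_zero, ← hval, hcoeff]
    rcases Nat.eq_zero_or_pos (a : ℚ[X]).natDegree with ha | ha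
    · exact Or.inl (isUnit_of_natDegree_eq_zero ha hconst)
    · exact Or.inr (isUnit_of_natDegree_eq_zero (by omega) (by rwa [mul_comm]))

end R

/-- For every positive integer n, (1/n)·X + 1 is irreducible in R. -/
theorem stmt_5 (n : ℕ) (hn : 0 < n) :
    Irreducible (⟨C (1 / (n : ℚ)) * X + 1, mem_R.mpr ⟨1, by simp⟩⟩ : R) := by
  have hslope : (1 / (n : ℚ)) ≠ 0 := by positivity
  apply R.irreducible_of_natDegree_eq_one
  · simpa using natDegree_linear (b := 1) hslope
  · simp
end

section
/- For every positive rational number c, the polynomial c·X² - 1, viewed as an element of the ring R of rational polynomials with integer constant term, is irreducible in R if and only if c is not the square of a rational number. -/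
open Polynomial

/-
Over `ℚ`, a quadratic is irreducible iff it has no root, and `c X² - 1` has a root iff `c` is a
square. Passing from `ℚ[X]` to `R` changes nothing: in a factorisation of `c X² - 1` inside `R`
one factor is a rational constant, which is an integer whose product with the integer constant
term of the other factor is `-1`, so it is `±1`, a unit of `R`. Conversely, if `c = q²` then
`c X² - 1 = (q X - 1)(q X + 1)` with both factors of positive degree.
-/

theorem Polynomial.irreducible_C_mul_X_sq_sub_one {K : Type*} [Field K] {c : K}
    (hc : ¬∃ q : K, q ^ 2 = c) : Irreducible (C c * X ^ 2 - 1 : K[X]) := by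
  have hc0 : c ≠ 0 := fun h => hc ⟨0, by simp [h]⟩
  apply irreducible_of_degree_le_three_of_not_isRoot
  · have hdeg : (C c * X ^ 2 - 1 : K[X]).natDegree = 2 := by compute_degree!
    simp [hdeg]
  · intro x hroot
    have hx : c * x ^ 2 = 1 := by simpa [sub_eq_zero] using hroot
    exact hc ⟨x⁻¹, by rw [inv_pow, eq_inv_of_mul_eq_one_left hx]⟩

namespace R

theorem not_isUnit_of_natDegree_pos {f : R} (hf : 0 < (f : ℚ[X]).natDegree) : ¬IsUnit f :=
  fun hu => hf.ne' (natDegree_eq_zero_of_isUnit (hu.map R.subtype))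

theorem isUnit_of_isUnit_coe_s6 {f : R} {m : ℤ} (hf : IsUnit (f : ℚ[X]))
    (hm : (f : ℚ[X]).coeff 0 = m) (hmu : IsUnit m) : IsUnit f := by
  have hfC : (f : ℚ[X]) = C (m : ℚ) := by
    rw [← hm]
    exact eq_C_of_natDegree_eq_zero (natDegree_eq_zero_of_isUnit hf)
  rcases Int.isUnit_iff.mp hmu with rfl | rfl
  · rw [show f = 1 from Subtype.ext (by simpa using hfC)]
    exact isUnit_one
  · rw [show f = -1 from Subtype.ext (by simpa using hfC)]
    exact isUnit_one.neg

theorem irreducible_of_irreducible_coe_s6 {p : R} {m : ℤ} (hp : Irreducible (p : ℚ[X]))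
    (hm : (p : ℚ[X]).coeff 0 = m) (hmu : IsUnit m) : Irreducible p := by
  refine ⟨fun hu => hp.not_isUnit (hu.map R.subtype), fun f g hfg => ?_⟩
  have hfg : (p : ℚ[X]) = f * g := congrArg Subtype.val hfg
  obtain ⟨a, ha⟩ := mem_R.mp f.2
  obtain ⟨b, hb⟩ := mem_R.mp g.2
  have hab : IsUnit (a * b) := by
    have h0 := congrArg (coeff · 0) hfg
    simp only [mul_coeff_zero, ha, hb, hm] at h0
    exact (show a * b = m by exact_mod_cast h0.symm) ▸ hmu
  rcases hp.isUnit_or_isUnit hfg with hf | hg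
  · exact Or.inl (isUnit_of_isUnit_coe_s6 hf ha (isUnit_of_mul_isUnit_left hab))
  · exact Or.inr (isUnit_of_isUnit_coe_s6 hg hb (isUnit_of_mul_isUnit_right hab))

theorem not_irreducible_C_sq_mul_X_sq_sub_one (q : ℚ) :
    ¬Irreducible (⟨C (q ^ 2) * X ^ 2 - 1, mem_R.mpr ⟨-1, by simp⟩⟩ : R) := by
  intro hirr
  rcases eq_or_ne q 0 with rfl | hq
  · refine hirr.not_isUnit ?_
    rw [show (⟨C (0 ^ 2) * X ^ 2 - 1, _⟩ : R) = -1 from Subtype.ext (by simp)]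
    exact isUnit_one.neg
  have hfac : (⟨C (q ^ 2) * X ^ 2 - 1, mem_R.mpr ⟨-1, by simp⟩⟩ : R) =
      ⟨C q * X - 1, mem_R.mpr ⟨-1, by simp⟩⟩ * ⟨C q * X + 1, mem_R.mpr ⟨1, by simp⟩⟩ :=
    Subtype.ext (by simp only [Subring.coe_mul, C_pow]; ring)
  have hdeg_sub : 0 < (C q * X - 1 : ℚ[X]).natDegree := by
    rw [← C_1, natDegree_sub_C, natDegree_C_mul_X q hq]; exact one_pos
  have hdeg_add : 0 < (C q * X + 1 : ℚ[X]).natDegree := by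
    rw [← C_1, natDegree_add_C, natDegree_C_mul_X q hq]; exact one_pos
  rcases hirr.isUnit_or_isUnit hfac with h | h
  · exact not_isUnit_of_natDegree_pos hdeg_sub h
  · exact not_isUnit_of_natDegree_pos hdeg_add h

end R

/-- For positive rational c, the element c·X² - 1 of R is irreducible
iff c is not the square of a rational. -/
theorem stmt_6 (c : ℚ) :
    Irreducible (⟨C c * X ^ 2 - 1, mem_R.mpr ⟨-1, by simp⟩⟩ : R) ↔
      ¬∃ q : ℚ, q ^ 2 = c := by
  refine ⟨?_, fun hc => R.irreducible_of_irreducible_coe_s6 (irreducible_C_mul_X_sq_sub_one hc)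
    (m := -1) (by simp) isUnit_one.neg⟩
  rintro hirr ⟨q, rfl⟩
  exact R.not_irreducible_C_sq_mul_X_sq_sub_one q hirr
end

section
/- In the ring R of rational polynomials with integer constant term, the element X² + 1 is irreducible in R. -/
/-!
`X ^ 2 + 1` is irreducible over `ℚ`, so in a factorization `a * b` inside `R` one factor, say `a`,
is a nonzero rational constant `c`. Comparing constant terms gives `c * m = 1` where `m ∈ ℤ` is the
constant term of `b`; hence the constant `m`, which lies in `R`, inverts `a` in `R`.
-/

open Polynomial

theorem SubmonoidClass.irreducible_of_irreducible_coe {M S : Type*} [CommMonoid M] [SetLike S M]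
    [SubmonoidClass S M] {s : S} {x : s} (hx : Irreducible (x : M))
    (hunit : ∀ a b : s, a * b = x → IsUnit (a : M) → IsUnit a) : Irreducible x := by
  refine ⟨fun hu ↦ hx.not_isUnit (hu.map (SubmonoidClass.subtype s)), fun a b hab ↦ ?_⟩
  rcases hx.isUnit_or_isUnit (congrArg Subtype.val hab) with ha | hb
  · exact Or.inl (hunit a b hab.symm ha)
  · exact Or.inr (hunit b a (by rw [mul_comm, hab]) hb)

theorem Polynomial.irreducible_X_sq_add_one {K : Type*} [Field K] [LinearOrder K]
    [IsStrictOrderedRing K] : Irreducible (X ^ 2 + 1 : K[X]) := by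
  apply irreducible_of_degree_le_three_of_not_isRoot
  · rw [show (X ^ 2 + 1 : K[X]).natDegree = 2 by compute_degree!]
    decide
  · intro x
    simp only [IsRoot, eval_add, eval_pow, eval_X, eval_one]
    positivity

theorem isUnit_of_mem_R_of_isUnit {a b : ℚ[X]} (ha : a ∈ R) (hb : b ∈ R)
    (hab : (a * b).coeff 0 = 1) (hu : IsUnit a) : IsUnit (⟨a, ha⟩ : R) := by
  obtain ⟨c, -, rfl⟩ := Polynomial.isUnit_iff.mp hu
  obtain ⟨m, hm⟩ := hb
  rw [mul_coeff_zero, hm, coeff_C_zero] at hab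
  refine IsUnit.of_mul_eq_one (⟨C (m : ℚ), m, coeff_C_zero⟩ : R) (Subtype.ext ?_)
  change C c * C (m : ℚ) = 1
  rw [← C_mul, hab, C_1]

/-- X² + 1 is irreducible in R. -/
theorem stmt_8 : Irreducible (⟨X ^ 2 + 1, mem_R.mpr ⟨1, by simp⟩⟩ : R) := by
  refine SubmonoidClass.irreducible_of_irreducible_coe irreducible_X_sq_add_one ?_
  rintro ⟨a, ha⟩ ⟨b, hb⟩ hab
  have hcoeff : (a * b).coeff 0 = 1 := by
    rw [show a * b = X ^ 2 + 1 from congrArg Subtype.val hab]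
    simp
  exact isUnit_of_mem_R_of_isUnit ha hb hcoeff
end

section
/- For every prime number p and every natural number m, both (1/p^(2m+1))·X² - 1 and (1/p^(2m+1))·X² + 1 are irreducible elements of the ring R of rational polynomials with integer constant term. -/
open Polynomial

/-!
A factorization `F = f * g` in `R` has integer constant terms with product `±1`, so both are `±1`;
hence a constant factor is `±1`, a unit of `R`. If neither factor is constant and `deg F ≤ 3`, one
factor is linear and gives a rational root of `F`. For `F = c X² ± 1` with `c = 1 / p ^ (2m + 1)`
a rational root would make `c` a square, or `c X² + 1` vanish although `c > 0`.
-/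

lemma not_isSquare_pow_of_odd {K : Type*} [CommGroupWithZero K] {a : K} (ha : ¬IsSquare a)
    {n : ℕ} (hn : Odd n) : ¬IsSquare (a ^ n) := by
  obtain ⟨m, rfl⟩ := hn
  have ha0 : a ≠ 0 := fun h => ha (h ▸ ⟨0, (mul_zero 0).symm⟩)
  have hpow : a ^ (2 * m + 1) = a * (a ^ m) ^ 2 := by rw [← pow_mul, mul_comm m, ← pow_succ']
  intro hsq
  refine ha ?_
  rw [hpow] at hsq
  simpa [ha0] using hsq.div (IsSquare.sq (a ^ m))

lemma isUnit_of_natDegree_eq_zero {f : R} (hdeg : f.1.natDegree = 0) {n : ℤ}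
    (hn : f.1.coeff 0 = n) (hu : IsUnit n) : IsUnit f := by
  have : f = algebraMap ℤ R n :=
    Subtype.ext (by rw [eq_C_of_natDegree_eq_zero hdeg, hn]; simp)
  exact this ▸ hu.map _

lemma irreducible_of_natDegree_le_three_of_forall_not_isRoot (F : R)
    (hpos : 0 < F.1.natDegree) (hle : F.1.natDegree ≤ 3)
    (hcoeff : ∃ u : ℤ, IsUnit u ∧ F.1.coeff 0 = u) (hroot : ∀ x : ℚ, ¬F.1.IsRoot x) :
    Irreducible F := by
  refine ⟨fun hu => hpos.ne' (natDegree_eq_zero_of_isUnit (hu.map R.subtype)), ?_⟩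
  rintro ⟨f, n, hn⟩ ⟨g, k, hk⟩ hFfg
  have hF : F.1 = f * g := congrArg Subtype.val hFfg
  obtain ⟨u, hu, hu0⟩ := hcoeff
  have hnk : IsUnit (n * k) := by
    have : ((n * k : ℤ) : ℚ) = u := by rw [Int.cast_mul, ← hn, ← hk, ← mul_coeff_zero, ← hF, hu0]
    exact Int.cast_injective this ▸ hu
  have hfg : f * g ≠ 0 := fun h => hpos.ne' (by rw [hF, h, natDegree_zero])
  have hf : f ≠ 0 := left_ne_zero_of_mul hfg
  have hg : g ≠ 0 := right_ne_zero_of_mul hfg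
  have hdeg : f.natDegree + g.natDegree = F.1.natDegree := by rw [hF, natDegree_mul hf hg]
  by_cases hf0 : f.natDegree = 0
  · exact .inl (isUnit_of_natDegree_eq_zero hf0 hn (isUnit_of_mul_isUnit_left hnk))
  by_cases hg0 : g.natDegree = 0
  · exact .inr (isUnit_of_natDegree_eq_zero hg0 hk (isUnit_of_mul_isUnit_right hnk))
  have hlin : f.degree = (1 : ℕ) ∨ g.degree = (1 : ℕ) := by
    rw [degree_eq_iff_natDegree_eq hf, degree_eq_iff_natDegree_eq hg]
    omega
  obtain ⟨x, hx⟩ : ∃ x, f.IsRoot x ∨ g.IsRoot x := hlin.elim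
    (fun h => (exists_root_of_degree_eq_one h).imp fun _ => .inl)
    (fun h => (exists_root_of_degree_eq_one h).imp fun _ => .inr)
  exact (hroot x (hF ▸ root_mul.mpr hx)).elim

lemma irreducible_C_mul_X_sq_sub_one {c : ℚ} (hc : ¬IsSquare c) :
    Irreducible (⟨C c * X ^ 2 - 1, mem_R.mpr ⟨-1, by simp⟩⟩ : R) := by
  have hc0 : c ≠ 0 := by rintro rfl; exact hc ⟨0, (mul_zero 0).symm⟩
  have hdeg : (C c * X ^ 2 - 1).natDegree = 2 := by compute_degree!
  refine irreducible_of_natDegree_le_three_of_forall_not_isRoot _ (by rw [hdeg]; norm_num)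
    (by rw [hdeg]; norm_num) ⟨-1, by simp⟩ fun x hx => ?_
  have hcx : c * x ^ 2 = 1 := by simpa [sub_eq_zero] using hx
  have hx0 : x ≠ 0 := by rintro rfl; simp at hcx
  exact hc ⟨x⁻¹, by field_simp; linear_combination hcx⟩

lemma irreducible_C_mul_X_sq_add_one {c : ℚ} (hc : 0 < c) :
    Irreducible (⟨C c * X ^ 2 + 1, mem_R.mpr ⟨1, by simp⟩⟩ : R) := by
  have hdeg : (C c * X ^ 2 + 1).natDegree = 2 := by compute_degree!; exact hc.ne'
  refine irreducible_of_natDegree_le_three_of_forall_not_isRoot _ (by rw [hdeg]; norm_num)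
    (by rw [hdeg]; norm_num) ⟨1, by simp⟩ fun x hx => ?_
  have hcx : c * x ^ 2 + 1 = 0 := by simpa using hx
  nlinarith [sq_nonneg x]

/-- For every prime p and natural m, both (1/p^(2m+1))·X² - 1 and (1/p^(2m+1))·X² + 1
are irreducible in R. -/
theorem stmt_10 (p : ℕ) (hp : p.Prime) (m : ℕ) :
    Irreducible (⟨C (1 / (p : ℚ) ^ (2 * m + 1)) * X ^ 2 - 1, mem_R.mpr ⟨-1, by simp⟩⟩ : R) ∧
    Irreducible (⟨C (1 / (p : ℚ) ^ (2 * m + 1)) * X ^ 2 + 1, mem_R.mpr ⟨1, by simp⟩⟩ : R) := by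
  have hnsq : ¬IsSquare (1 / (p : ℚ) ^ (2 * m + 1)) := by
    rw [one_div, isSquare_inv]
    exact not_isSquare_pow_of_odd (Rat.isSquare_natCast_iff.not.mpr hp.not_isSquare) ⟨m, rfl⟩
  have hpos : 0 < 1 / (p : ℚ) ^ (2 * m + 1) := by have := hp.pos; positivity
  exact ⟨irreducible_C_mul_X_sq_sub_one hnsq, irreducible_C_mul_X_sq_add_one hpos⟩
end

section
/- In the ring R of rational polynomials with integer constant term, there exist infinitely many pairwise distinct elements x such that both x - 1 and x + 1 are irreducible in R; concretely, the elements x_m = (1/2^(2m+1))·X² for m ∈ ℕ are pairwise distinct and x_m - 1 and x_m + 1 are irreducible for every m. -/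
/-!
Over `ℚ`, `c X² ± 1` is irreducible as soon as it has no rational root; for
`c = 1 / 2^(2m+1)` this holds because `2^(2m+1)` is not a rational square. Irreducibility
passes to `R` because the constant coefficient `±1` forces any constant factor of a
factorization in `R` to be an integer unit.
-/

open Polynomial

lemma isUnit_of_isUnit_coe {g : R} {a : ℤ} (ha : IsUnit a) (hg0 : (g : ℚ[X]).coeff 0 = a)
    (hg : IsUnit (g : ℚ[X])) : IsUnit g := by
  have hga : g = (a : R) := Subtype.ext <| by
    rw [eq_C_of_natDegree_eq_zero (natDegree_eq_zero_of_isUnit hg), hg0]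
    simp
  exact hga ▸ ha.map (Int.castRingHom R)

lemma irreducible_of_irreducible_coe {f : R} {u : ℤ} (hu : IsUnit u)
    (hf0 : (f : ℚ[X]).coeff 0 = u) (hf : Irreducible (f : ℚ[X])) : Irreducible f := by
  refine ⟨fun h => hf.not_isUnit (h.map R.subtype), fun g h hgh => ?_⟩
  have hval : (f : ℚ[X]) = g * h := congrArg Subtype.val hgh
  obtain ⟨a, ha⟩ := mem_R.mp g.2
  obtain ⟨b, hb⟩ := mem_R.mp h.2
  have hab : a * b = u := by
    have := congrArg (coeff · 0) hval
    simp only [mul_coeff_zero, ha, hb, hf0] at this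
    exact_mod_cast this.symm
  rcases hf.isUnit_or_isUnit hval with hg | hh
  · exact .inl (isUnit_of_isUnit_coe (isUnit_of_mul_isUnit_left (hab ▸ hu)) ha hg)
  · exact .inr (isUnit_of_isUnit_coe (isUnit_of_mul_isUnit_right (hab ▸ hu)) hb hh)

lemma irreducible_C_mul_X_sq_add_C {K : Type*} [Field K] {c e : K} (hc : c ≠ 0)
    (hroot : ∀ a, c * a ^ 2 + e ≠ 0) : Irreducible (C c * X ^ 2 + C e) :=
  irreducible_of_degree_le_three_of_not_isRoot
    (by rw [natDegree_add_C, natDegree_C_mul_X_pow 2 c hc]; decide) (by simpa using hroot)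

lemma irreducible_add_intCast {y : R} {c : ℚ} (hy : (y : ℚ[X]) = C c * X ^ 2) (hc : c ≠ 0)
    {u : ℤ} (hu : IsUnit u) (hroot : ∀ a : ℚ, c * a ^ 2 + u ≠ 0) : Irreducible (y + u) := by
  have hyu : ((y + u : R) : ℚ[X]) = C c * X ^ 2 + C (u : ℚ) := by simp [hy]
  refine irreducible_of_irreducible_coe hu (by simp [hyu]) ?_
  rw [hyu]
  exact irreducible_C_mul_X_sq_add_C hc hroot

lemma sq_ne_two_pow_odd (a : ℚ) (m : ℕ) : a ^ 2 ≠ 2 ^ (2 * m + 1) := by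
  intro h
  have : ¬IsSquare (2 : ℚ) := by norm_num
  exact this ⟨a / 2 ^ m, by field_simp; rw [h]; ring⟩

/-- There are infinitely many x ∈ R with x - 1 and x + 1 both irreducible; concretely,
the pairwise distinct elements x_m = (1/2^(2m+1))·X² work. -/
theorem stmt_11 :
    let x : ℕ → R := fun m =>
      ⟨C (1 / (2 : ℚ) ^ (2 * m + 1)) * X ^ 2, mem_R.mpr ⟨0, by simp⟩⟩
    Function.Injective x ∧
    (∀ m : ℕ, Irreducible (x m - 1) ∧ Irreducible (x m + 1)) ∧
    {y : R | Irreducible (y - 1) ∧ Irreducible (y + 1)}.Infinite := by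
  intro x
  have hx (m : ℕ) : (x m : ℚ[X]) = C (1 / 2 ^ (2 * m + 1)) * X ^ 2 := rfl
  have hc (m : ℕ) : (1 / (2 : ℚ) ^ (2 * m + 1)) ≠ 0 := by positivity
  have hinj : Function.Injective x := fun m n h => by
    have h2 := congrArg (fun y : R => (y : ℚ[X]).coeff 2) h
    simp only [hx, coeff_C_mul_X_pow, if_true, one_div, inv_inj] at h2
    rw [pow_right_inj₀ two_pos (by norm_num)] at h2
    omega
  have hirr (m : ℕ) : Irreducible (x m - 1) ∧ Irreducible (x m + 1) := by
    constructor
    · have hroot (a : ℚ) : 1 / 2 ^ (2 * m + 1) * a ^ 2 + ((-1 : ℤ) : ℚ) ≠ 0 := by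
        intro h
        field_simp at h
        exact sq_ne_two_pow_odd a m (by linear_combination h)
      simpa [sub_eq_add_neg] using irreducible_add_intCast (hx m) (hc m) isUnit_one.neg hroot
    · have hroot (a : ℚ) : 1 / 2 ^ (2 * m + 1) * a ^ 2 + ((1 : ℤ) : ℚ) ≠ 0 := by positivity
      simpa using irreducible_add_intCast (hx m) (hc m) isUnit_one hroot
  exact ⟨hinj, hirr, Set.infinite_of_injective_forall_mem hinj hirr⟩
end

section
/- In the ring R of rational polynomials with integer constant term, for all rationals a, c and integers b, d: if (a·X + b)·(c·X + d) = s·X² + e for some rational s > 0 and integer e with e = 1 or e = -1, then b·d = e and a·d + b·c = 0 and a·c = s; consequently b = d = 1 or b = d = -1 when e = 1, and in that case a = -c and s = -a² < 0, a contradiction — hence s·X² + 1 has no factorization into two degree-one elements of R. -/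
/-!
Comparing coefficients of `(a X + b)(c X + d) = s X² + e` gives `a c = s`, `a d + b c = 0` and
`b d = e`. The last two force `(a c)(b d) = (a d)(b c) = -(a d)² ≤ 0`, so when `b d = 1` the leading
coefficient `s = a c` cannot be positive.
-/

open Polynomial

section LinearFactors

variable {A : Type*} [CommRing A]

theorem linear_mul_linear (a b c d : A) :
    (C a * X + C b) * (C c * X + C d) = C (a * c) * X ^ 2 + C (a * d + b * c) * X + C (b * d) := by
  simp only [map_add, map_mul]
  ring

theorem linear_mul_linear_eq_C_mul_X_sq_add_C_iff (a b c d s e : A) :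
    (C a * X + C b) * (C c * X + C d) = C s * X ^ 2 + C e ↔
      a * c = s ∧ a * d + b * c = 0 ∧ b * d = e := by
  rw [linear_mul_linear]
  constructor
  · intro h
    have h2 := congrArg (coeff · 2) h
    have h1 := congrArg (coeff · 1) h
    have h0 := congrArg (coeff · 0) h
    simp only [coeff_add, coeff_C_mul, coeff_X_pow, coeff_X, coeff_C] at h2 h1 h0
    norm_num at h2 h1 h0
    exact ⟨h2, h1, h0⟩
  · rintro ⟨rfl, hcross, rfl⟩
    rw [hcross, map_zero, zero_mul, add_zero]

end LinearFactors

theorem mul_nonpos_of_add_mul_eq_zero {K : Type*} [CommRing K] [LinearOrder K] [IsStrictOrderedRing K]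
    {a b c d : K} (hcross : a * d + b * c = 0) (hbd : 0 < b * d) : a * c ≤ 0 := by
  have key : a * c * (b * d) = -(a * d) ^ 2 := by
    linear_combination (a * d) * hcross
  exact nonpos_of_mul_nonpos_left (key ▸ neg_nonpos.2 (sq_nonneg _)) hbd

theorem stmt_18_general (a c : ℚ) (b d : ℤ) (s : ℚ) (e : ℤ) (hs : 0 < s)
    (hfac : (C a * X + C (b : ℚ)) * (C c * X + C (d : ℚ)) = C s * X ^ 2 + C (e : ℚ)) :
    b * d = e ∧ a * (d : ℚ) + (b : ℚ) * c = 0 ∧ a * c = s ∧ (e = 1 → False) := by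
  obtain ⟨hac, hcross, hbd⟩ := (linear_mul_linear_eq_C_mul_X_sq_add_C_iff _ _ _ _ _ _).1 hfac
  have hbd : b * d = e := by exact_mod_cast hbd
  refine ⟨hbd, hcross, hac, fun he1 => ?_⟩
  have hbd_pos : 0 < (b : ℚ) * d := by
    rw [← Int.cast_mul, hbd, he1]
    exact one_pos
  exact (mul_nonpos_of_add_mul_eq_zero hcross hbd_pos).not_gt (hac ▸ hs)

/-- Coefficient comparison: if (a·X + b)(c·X + d) = s·X² + e in R with s > 0 and e = ±1,
then b·d = e, a·d + b·c = 0, a·c = s, and the case e = 1 is impossible; hence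
s·X² + 1 admits no factorization into two degree-one elements of R. -/
theorem stmt_18 (a c : ℚ) (b d : ℤ) (s : ℚ) (e : ℤ) (hs : 0 < s) (he : e = 1 ∨ e = -1)
    (hfac : (C a * X + C (b : ℚ)) * (C c * X + C (d : ℚ)) = C s * X ^ 2 + C (e : ℚ)) :
    b * d = e ∧ a * (d : ℚ) + (b : ℚ) * c = 0 ∧ a * c = s ∧ (e = 1 → False) :=
  stmt_18_general a c b d s e hs hfac
end
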